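/- Let p be a primitive third root of unity in ℂ. Define the 6×6 matrices M1 = [[p+1, p-1, p-1, p-1, -p+1, -p+1], [-2p-1, -1, -2p-1, 2p+1, -2p-1, 2p+1], [p+2, p+2, -p, -p-2, -p-2, p+2], [-p-2, -3p, p+2, -p+2, 3p, -p-2], [p-1, -p+1, 3p+3, -p+1, 3p+1, -3p-3], [-3, -2p-1, 2p+1, 3, 2p+1, -2p-3]] and M2 = [[p+1, p-1, p-1, -p+1, p-1, p-1], [-2p-1, -1, -2p-1, -2p-1, 2p+1, -2p-1], [p+2, p+2, -p, p+2, p+2, -p-2], [p+2, 3p, -p-2, -p+2, 3p, -p-2], [-p+1, p-1, -3p-3, -p+1, 3p+1, -3p-3], [3, 2p+1, -2p-1, 3, 2p+1, -2p-3]]. Then M1 and M2 are invertible and satisfy the braid relation M1·M2·M1 = M2·M1·M2, so σ₁ ↦ M1, σ₂ ↦ M2 defines a representation of B₃ of dimension 6. -/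

import Mathlib

open Matrix

/-- The single braid relation of `B₃`. -/
def braidRel : Set (FreeGroup (Fin 2)) :=
  {FreeGroup.of 0 * FreeGroup.of 1 * FreeGroup.of 0 *
    (FreeGroup.of 1 * FreeGroup.of 0 * FreeGroup.of 1)⁻¹}

/-- The braid group on three strands. -/
abbrev B3 : Type := PresentedGroup braidRel

/-- The generators of `B₃`. -/
def b3σ (i : Fin 2) : B3 := PresentedGroup.of i

/-- Le Bruyn's matrix for `σ₁`. -/
def M1 (p : ℂ) : Matrix (Fin 6) (Fin 6) ℂ :=
  !![p+1, p-1, p-1, p-1, -p+1, -p+1;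
     -2*p-1, -1, -2*p-1, 2*p+1, -2*p-1, 2*p+1;
     p+2, p+2, -p, -p-2, -p-2, p+2;
     -p-2, -3*p, p+2, -p+2, 3*p, -p-2;
     p-1, -p+1, 3*p+3, -p+1, 3*p+1, -3*p-3;
     -3, -2*p-1, 2*p+1, 3, 2*p+1, -2*p-3]

/-- Le Bruyn's matrix for `σ₂`. -/
def M2 (p : ℂ) : Matrix (Fin 6) (Fin 6) ℂ :=
  !![p+1, p-1, p-1, -p+1, p-1, p-1;
     -2*p-1, -1, -2*p-1, -2*p-1, 2*p+1, -2*p-1;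
     p+2, p+2, -p, p+2, p+2, -p-2;
     p+2, 3*p, -p-2, -p+2, 3*p, -p-2;
     -p+1, p-1, -3*p-3, -p+1, 3*p+1, -3*p-3;
     3, 2*p+1, -2*p-1, 3, 2*p+1, -2*p-3]

@[simp] theorem cons_val_five {α : Type*} (a : α) (s : Fin 5 → α) :
    Matrix.vecCons a s 5 = s 4 := rfl

set_option maxHeartbeats 4000000 in
theorem stmt_9 (p : ℂ) (hp : p ^ 2 + p + 1 = 0) :
    IsUnit (M1 p) ∧ IsUnit (M2 p) ∧
    M1 p * M2 p * M1 p = M2 p * M1 p * M2 p ∧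
    ∃ φ : B3 →* GL (Fin 6) ℂ,
      (φ (b3σ 0) : Matrix (Fin 6) (Fin 6) ℂ) = M1 p ∧
      (φ (b3σ 1) : Matrix (Fin 6) (Fin 6) ℂ) = M2 p := by
  have hI1 : M1 p * !![((0) + (-1/4)*p), ((-1/2) + (-1/4)*p), ((-1/2) + (-1/4)*p), ((1/2) + (1/4)*p), ((-1/2) + (-1/4)*p), ((-1/2) + (-1/4)*p);
    ((1/4) + (1/2)*p), ((-1/4) + (0)*p), ((1/4) + (1/2)*p), ((1/4) + (1/2)*p), ((-1/4) + (-1/2)*p), ((1/4) + (1/2)*p);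
    ((1/4) + (-1/4)*p), ((1/4) + (-1/4)*p), ((1/4) + (1/4)*p), ((1/4) + (-1/4)*p), ((1/4) + (-1/4)*p), ((-1/4) + (1/4)*p);
    ((1/4) + (-1/4)*p), ((-3/4) + (-3/4)*p), ((-1/4) + (1/4)*p), ((3/4) + (1/4)*p), ((-3/4) + (-3/4)*p), ((-1/4) + (1/4)*p);
    ((1/2) + (1/4)*p), ((-1/2) + (-1/4)*p), ((0) + (3/4)*p), ((1/2) + (1/4)*p), ((-1/2) + (-3/4)*p), ((0) + (3/4)*p);
    ((3/4) + (0)*p), ((-1/4) + (-1/2)*p), ((1/4) + (1/2)*p), ((3/4) + (0)*p), ((-1/4) + (-1/2)*p), ((-1/4) + (1/2)*p)] = 1 := by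
    ext i j
    fin_cases i <;> fin_cases j <;>
      simp [M1, Matrix.mul_apply, Fin.sum_univ_succ, Matrix.one_apply]
    · linear_combination ((-1/2)) * hp
    · linear_combination ((-1/2)) * hp
    · linear_combination ((-1/2)) * hp
    · linear_combination ((1/2)) * hp
    · linear_combination ((-1/2)) * hp
    · linear_combination ((-1/2)) * hp
    · linear_combination (0:ℂ) * hp
    · linear_combination ((-1)) * hp
    · linear_combination (0:ℂ) * hp
    · linear_combination (0:ℂ) * hp
    · linear_combination (0:ℂ) * hp
    · linear_combination (0:ℂ) * hp
    · linear_combination ((1/2)) * hp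
    · linear_combination ((1/2)) * hp
    · linear_combination ((-1/2)) * hp
    · linear_combination ((1/2)) * hp
    · linear_combination ((1/2)) * hp
    · linear_combination ((-1/2)) * hp
    · linear_combination ((-1/2)) * hp
    · linear_combination ((1/2)) * hp
    · linear_combination ((1/2)) * hp
    · linear_combination ((-3/2)) * hp
    · linear_combination ((1/2)) * hp
    · linear_combination ((1/2)) * hp
    · linear_combination ((-1/2)) * hp
    · linear_combination ((1/2)) * hp
    · linear_combination ((1/2)) * hp
    · linear_combination ((-1/2)) * hp
    · linear_combination ((-1/2)) * hp
    · linear_combination ((1/2)) * hp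
    · linear_combination ((-1)) * hp
    · linear_combination (0:ℂ) * hp
    · linear_combination (0:ℂ) * hp
    · linear_combination ((-1)) * hp
    · linear_combination (0:ℂ) * hp
    · linear_combination (0:ℂ) * hp
  have hI2 : M2 p * !![((0) + (-1/4)*p), ((-1/2) + (-1/4)*p), ((-1/2) + (-1/4)*p), ((-1/2) + (-1/4)*p), ((1/2) + (1/4)*p), ((1/2) + (1/4)*p);
    ((1/4) + (1/2)*p), ((-1/4) + (0)*p), ((1/4) + (1/2)*p), ((-1/4) + (-1/2)*p), ((1/4) + (1/2)*p), ((-1/4) + (-1/2)*p);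
    ((1/4) + (-1/4)*p), ((1/4) + (-1/4)*p), ((1/4) + (1/4)*p), ((-1/4) + (1/4)*p), ((-1/4) + (1/4)*p), ((1/4) + (-1/4)*p);
    ((-1/4) + (1/4)*p), ((3/4) + (3/4)*p), ((1/4) + (-1/4)*p), ((3/4) + (1/4)*p), ((-3/4) + (-3/4)*p), ((-1/4) + (1/4)*p);
    ((-1/2) + (-1/4)*p), ((1/2) + (1/4)*p), ((0) + (-3/4)*p), ((1/2) + (1/4)*p), ((-1/2) + (-3/4)*p), ((0) + (3/4)*p);
    ((-3/4) + (0)*p), ((1/4) + (1/2)*p), ((-1/4) + (-1/2)*p), ((3/4) + (0)*p), ((-1/4) + (-1/2)*p), ((-1/4) + (1/2)*p)] = 1 := by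
    ext i j
    fin_cases i <;> fin_cases j <;>
      simp [M2, Matrix.mul_apply, Fin.sum_univ_succ, Matrix.one_apply]
    · linear_combination ((-1/2)) * hp
    · linear_combination ((-1/2)) * hp
    · linear_combination ((-1/2)) * hp
    · linear_combination ((-1/2)) * hp
    · linear_combination ((1/2)) * hp
    · linear_combination ((1/2)) * hp
    · linear_combination (0:ℂ) * hp
    · linear_combination ((-1)) * hp
    · linear_combination (0:ℂ) * hp
    · linear_combination (0:ℂ) * hp
    · linear_combination (0:ℂ) * hp
    · linear_combination (0:ℂ) * hp
    · linear_combination ((1/2)) * hp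
    · linear_combination ((1/2)) * hp
    · linear_combination ((-1/2)) * hp
    · linear_combination ((-1/2)) * hp
    · linear_combination ((-1/2)) * hp
    · linear_combination ((1/2)) * hp
    · linear_combination ((1/2)) * hp
    · linear_combination ((-1/2)) * hp
    · linear_combination ((-1/2)) * hp
    · linear_combination ((-3/2)) * hp
    · linear_combination ((1/2)) * hp
    · linear_combination ((1/2)) * hp
    · linear_combination ((1/2)) * hp
    · linear_combination ((-1/2)) * hp
    · linear_combination ((-1/2)) * hp
    · linear_combination ((-1/2)) * hp
    · linear_combination ((-1/2)) * hp
    · linear_combination ((1/2)) * hp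
    · linear_combination ((1)) * hp
    · linear_combination (0:ℂ) * hp
    · linear_combination (0:ℂ) * hp
    · linear_combination ((-1)) * hp
    · linear_combination (0:ℂ) * hp
    · linear_combination (0:ℂ) * hp
  have hU1 : IsUnit (M1 p) := (Matrix.isUnit_iff_isUnit_det _).2 (Matrix.isUnit_det_of_right_inverse hI1)
  have hU2 : IsUnit (M2 p) := (Matrix.isUnit_iff_isUnit_det _).2 (Matrix.isUnit_det_of_right_inverse hI2)
  have h12 : M1 p * M2 p = !![((-2)*p), ((-4) + (-2)*p), ((-4) + (-2)*p), ((4) + (2)*p), ((-4) + (-2)*p), ((-4) + (-2)*p);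
    ((2) + (4)*p), ((-2)), ((2) + (4)*p), ((2) + (4)*p), ((-2) + (-4)*p), ((2) + (4)*p);
    ((2) + (-2)*p), ((2) + (-2)*p), ((2) + (2)*p), ((2) + (-2)*p), ((2) + (-2)*p), ((-2) + (2)*p);
    ((-2) + (2)*p), ((6) + (6)*p), ((2) + (-2)*p), ((-6) + (-2)*p), ((6) + (6)*p), ((2) + (-2)*p);
    ((-4) + (-2)*p), ((4) + (2)*p), ((-6)*p), ((-4) + (-2)*p), ((4) + (6)*p), ((-6)*p);
    ((-6)), ((2) + (4)*p), ((-2) + (-4)*p), ((-6)), ((2) + (4)*p), ((2) + (-4)*p)] := by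
    ext i j
    fin_cases i <;> fin_cases j <;>
      simp [M1, M2, Matrix.mul_apply, Fin.sum_univ_succ]
    · linear_combination ((2)) * hp
    · linear_combination ((2)) * hp
    · linear_combination ((2)) * hp
    · linear_combination ((-2)) * hp
    · linear_combination ((2)) * hp
    · linear_combination ((2)) * hp
    · linear_combination (0:ℂ) * hp
    · linear_combination ((4)) * hp
    · linear_combination (0:ℂ) * hp
    · linear_combination (0:ℂ) * hp
    · linear_combination (0:ℂ) * hp
    · linear_combination (0:ℂ) * hp
    · linear_combination ((-2)) * hp
    · linear_combination ((-2)) * hp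
    · linear_combination ((2)) * hp
    · linear_combination ((-2)) * hp
    · linear_combination ((-2)) * hp
    · linear_combination ((2)) * hp
    · linear_combination ((2)) * hp
    · linear_combination ((-2)) * hp
    · linear_combination ((-2)) * hp
    · linear_combination ((6)) * hp
    · linear_combination ((-2)) * hp
    · linear_combination ((-2)) * hp
    · linear_combination ((2)) * hp
    · linear_combination ((-2)) * hp
    · linear_combination ((-2)) * hp
    · linear_combination ((2)) * hp
    · linear_combination ((2)) * hp
    · linear_combination ((-2)) * hp
    · linear_combination ((4)) * hp
    · linear_combination (0:ℂ) * hp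
    · linear_combination (0:ℂ) * hp
    · linear_combination ((4)) * hp
    · linear_combination (0:ℂ) * hp
    · linear_combination (0:ℂ) * hp
  have h21 : M2 p * M1 p = !![((-2)*p), ((-4) + (-2)*p), ((-4) + (-2)*p), ((-4) + (-2)*p), ((4) + (2)*p), ((4) + (2)*p);
    ((2) + (4)*p), ((-2)), ((2) + (4)*p), ((-2) + (-4)*p), ((2) + (4)*p), ((-2) + (-4)*p);
    ((2) + (-2)*p), ((2) + (-2)*p), ((2) + (2)*p), ((-2) + (2)*p), ((-2) + (2)*p), ((2) + (-2)*p);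
    ((2) + (-2)*p), ((-6) + (-6)*p), ((-2) + (2)*p), ((-6) + (-2)*p), ((6) + (6)*p), ((2) + (-2)*p);
    ((4) + (2)*p), ((-4) + (-2)*p), ((6)*p), ((-4) + (-2)*p), ((4) + (6)*p), ((-6)*p);
    ((6)), ((-2) + (-4)*p), ((2) + (4)*p), ((-6)), ((2) + (4)*p), ((2) + (-4)*p)] := by
    ext i j
    fin_cases i <;> fin_cases j <;>
      simp [M1, M2, Matrix.mul_apply, Fin.sum_univ_succ]
    · linear_combination ((2)) * hp
    · linear_combination ((2)) * hp
    · linear_combination ((2)) * hp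
    · linear_combination ((2)) * hp
    · linear_combination ((-2)) * hp
    · linear_combination ((-2)) * hp
    · linear_combination (0:ℂ) * hp
    · linear_combination ((4)) * hp
    · linear_combination (0:ℂ) * hp
    · linear_combination (0:ℂ) * hp
    · linear_combination (0:ℂ) * hp
    · linear_combination (0:ℂ) * hp
    · linear_combination ((-2)) * hp
    · linear_combination ((-2)) * hp
    · linear_combination ((2)) * hp
    · linear_combination ((2)) * hp
    · linear_combination ((2)) * hp
    · linear_combination ((-2)) * hp
    · linear_combination ((-2)) * hp
    · linear_combination ((2)) * hp
    · linear_combination ((2)) * hp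
    · linear_combination ((6)) * hp
    · linear_combination ((-2)) * hp
    · linear_combination ((-2)) * hp
    · linear_combination ((-2)) * hp
    · linear_combination ((2)) * hp
    · linear_combination ((2)) * hp
    · linear_combination ((2)) * hp
    · linear_combination ((2)) * hp
    · linear_combination ((-2)) * hp
    · linear_combination ((-4)) * hp
    · linear_combination (0:ℂ) * hp
    · linear_combination (0:ℂ) * hp
    · linear_combination ((4)) * hp
    · linear_combination (0:ℂ) * hp
    · linear_combination (0:ℂ) * hp
  have hbr : M1 p * M2 p * M1 p = M2 p * M1 p * M2 p := by
    rw [h12, h21]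
    ext i j
    fin_cases i <;> fin_cases j <;>
      simp [M1, M2, Matrix.mul_apply, Fin.sum_univ_succ]
    · linear_combination (((-4)) - ((-4))) * hp
    · linear_combination (((-4)) - ((-4))) * hp
    · linear_combination (((-4)) - ((-4))) * hp
    · linear_combination (((-4)) - ((4))) * hp
    · linear_combination (((4)) - ((-4))) * hp
    · linear_combination (((4)) - ((-4))) * hp
    · linear_combination ((0:ℂ) - (0:ℂ)) * hp
    · linear_combination (((-8)) - ((-8))) * hp
    · linear_combination ((0:ℂ) - (0:ℂ)) * hp
    · linear_combination ((0:ℂ) - (0:ℂ)) * hp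
    · linear_combination ((0:ℂ) - (0:ℂ)) * hp
    · linear_combination ((0:ℂ) - (0:ℂ)) * hp
    · linear_combination (((4)) - ((4))) * hp
    · linear_combination (((4)) - ((4))) * hp
    · linear_combination (((-4)) - ((-4))) * hp
    · linear_combination (((-4)) - ((4))) * hp
    · linear_combination (((-4)) - ((4))) * hp
    · linear_combination (((4)) - ((-4))) * hp
    · linear_combination (((-4)) - ((4))) * hp
    · linear_combination (((4)) - ((-4))) * hp
    · linear_combination (((4)) - ((-4))) * hp
    · linear_combination (((12)) - ((12))) * hp
    · linear_combination (((-4)) - ((-4))) * hp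
    · linear_combination (((-4)) - ((-4))) * hp
    · linear_combination (((-4)) - ((4))) * hp
    · linear_combination (((4)) - ((-4))) * hp
    · linear_combination (((4)) - ((-4))) * hp
    · linear_combination (((4)) - ((4))) * hp
    · linear_combination (((4)) - ((4))) * hp
    · linear_combination (((-4)) - ((-4))) * hp
    · linear_combination (((-8)) - ((8))) * hp
    · linear_combination ((0:ℂ) - (0:ℂ)) * hp
    · linear_combination ((0:ℂ) - (0:ℂ)) * hp
    · linear_combination (((8)) - ((8))) * hp
    · linear_combination ((0:ℂ) - (0:ℂ)) * hp
    · linear_combination ((0:ℂ) - (0:ℂ)) * hp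
  refine ⟨hU1, hU2, hbr, ?_⟩
  set f : Fin 2 → GL (Fin 6) ℂ := ![hU1.unit, hU2.unit] with hf
  have hrel : ∀ r ∈ braidRel, FreeGroup.lift f r = 1 := by
    intro r hr
    rcases hr with rfl
    simp only [_root_.map_mul, map_inv, FreeGroup.lift_apply_of, hf]
    rw [mul_inv_eq_one]
    ext : 1
    simpa [Units.val_mul, hU1.unit_spec, hU2.unit_spec] using hbr
  refine ⟨PresentedGroup.toGroup hrel, ?_, ?_⟩ <;>
    simp [b3σ, PresentedGroup.toGroup.of, hf, hU1.unit_spec, hU2.unit_spec]
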